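/- arXiv:2103.00758 — 4 statements merged into one kernel-verified Lean document; each statement's English description precedes it below -/
import Mathlib

section
/- For every integer P ≥ 2 there exists N such that for all n ≥ N: every n-length code A capable of correcting all 3P-far deletable error patterns satisfies R(A) ≥ n/(64(3P+6)) - 3. -/
/-! Error positions `i` with `3P ∣ i + 1` are pairwise `3P` apart, so every substitution pattern
supported there is `3P`-far. Substituting the ones of a codeword at those positions clears them
and keeps the other coordinates, so a code correcting these patterns is determined by its
coordinates off those `⌊n / 3P⌋` positions, and `R(A) ≥ ⌊n / 3P⌋`. -/

/-- The three kinds of deletable errors: deletion, erasure, substitution (flip). -/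
inductive ErrKind : Type
  | D
  | E
  | F
  deriving DecidableEq

instance : Fintype ErrKind where
  elems := {ErrKind.D, ErrKind.E, ErrKind.F}
  complete := by intro x; cases x <;> decide

/-- A binary word of length `n`. -/
abbrev Word (n : ℕ) := Fin n → Bool

/-- A deletable error pattern of length `n`: a pair `(e, v)`. -/
abbrev Pattern (n : ℕ) := (Fin n → Bool) × (Fin n → ErrKind)

/-- Process a list of (bit, error indicator, error kind) triples in order,
producing the corrupted string over `{0, 1, ε}` (`none` is the erasure symbol). -/
def corruptAux : List (Bool × Bool × ErrKind) → List (Option Bool)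
  | [] => []
  | (xi, false, _) :: rest => some xi :: corruptAux rest
  | (_, true, ErrKind.D) :: rest => corruptAux rest
  | (_, true, ErrKind.E) :: rest => none :: corruptAux rest
  | (xi, true, ErrKind.F) :: rest => some (!xi) :: corruptAux rest

/-- The corruption `F_g(x)` of the word `x` by the pattern `g`. -/
def corrupt {n : ℕ} (g : Pattern n) (x : Word n) : List (Option Bool) :=
  corruptAux (List.ofFn fun i => (x i, g.1 i, g.2 i))

/-- The corruption `F_g(x, t)` of the first `t` bits of `x` by the first `t` entries of `g`. -/
def corruptPrefix {n : ℕ} (g : Pattern n) (x : Word n) (t : ℕ) : List (Option Bool) :=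
  corruptAux ((List.ofFn fun i => (x i, g.1 i, g.2 i)).take t)

/-- The number of errors `Σ_i e_i` of a pattern. -/
def errCount {n : ℕ} (g : Pattern n) : ℕ :=
  (Finset.univ.filter fun i => g.1 i = true).card

/-- `E_n(r)`: the set of `n`-length deletable error patterns with at most `r` errors. -/
def Epat (n r : ℕ) : Finset (Pattern n) :=
  Finset.univ.filter fun g => errCount g ≤ r

/-- A pattern is `P`-far if any two distinct error positions are at distance at least `P`. -/
def IsPFar {n : ℕ} (P : ℕ) (g : Pattern n) : Prop :=
  ∀ i j : Fin n, i ≠ j → g.1 i = true → g.1 j = true →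
    (P : ℤ) ≤ |((i : ℕ) : ℤ) - ((j : ℕ) : ℤ)|

/-- The code `C` corrects all error patterns in `F`. -/
def CorrectsIn {n : ℕ} (C : Finset (Word n)) (F : Set (Pattern n)) : Prop :=
  ∀ x₁ ∈ C, ∀ x₂ ∈ C, x₁ ≠ x₂ → ∀ g₁ ∈ F, ∀ g₂ ∈ F, corrupt g₁ x₁ ≠ corrupt g₂ x₂

/-- The code `C` corrects all error patterns in `F` in real-time with delay at most `d`. -/
def CorrectsRealTime {n : ℕ} (C : Finset (Word n)) (F : Set (Pattern n)) (d : ℕ) : Prop :=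
  ∀ z : ℕ, 1 ≤ z → z ≤ n - d → ∀ x₁ ∈ C, ∀ x₂ ∈ C, x₁ ≠ x₂ →
    ∀ g₁ ∈ F, ∀ g₂ ∈ F, corruptPrefix g₁ x₁ (z + d) ≠ corruptPrefix g₂ x₂ (z + d)

/-- The redundancy `R(C) = n - log₂ #C` of an `n`-length code `C`. -/
noncomputable def redundancy {n : ℕ} (C : Finset (Word n)) : ℝ :=
  (n : ℝ) - Real.logb 2 (C.card)

open Finset

lemma corruptAux_map_substitution (l : List (Bool × Bool)) :
    corruptAux (l.map fun p => (p.1, p.2, ErrKind.F)) = l.map fun p => some (xor p.2 p.1) := by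
  induction l with
  | nil => rfl
  | cons p l ih =>
    obtain ⟨b, _ | _⟩ := p <;> simp [corruptAux, ih]

lemma corrupt_substitution {n : ℕ} (e : Fin n → Bool) (x : Word n) :
    corrupt (e, fun _ => ErrKind.F) x = List.ofFn fun i => some (xor (e i) (x i)) := by
  have h := corruptAux_map_substitution (List.ofFn fun i => (x i, e i))
  simp only [List.map_ofFn] at h
  exact h

lemma isPFar_of_dvd_sub {n q : ℕ} {g : Pattern n}
    (hg : ∀ i j : Fin n, g.1 i = true → g.1 j = true → (q : ℤ) ∣ (i : ℤ) - (j : ℤ)) :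
    IsPFar q g := by
  intro i j hij hi hj
  have hne : (i : ℤ) - (j : ℤ) ≠ 0 := by
    intro h
    exact hij (Fin.ext (by omega))
  exact Int.le_of_dvd (abs_pos.mpr hne) ((dvd_abs _ _).mpr (hg i j hi hj))

lemma card_le_of_correctsIn_substitutions {n : ℕ} {A : Finset (Word n)} {F : Set (Pattern n)}
    (S : Finset (Fin n))
    (hF : ∀ e : Fin n → Bool, (∀ i, e i = true → i ∈ S) → (e, fun _ => ErrKind.F) ∈ F)
    (hA : CorrectsIn A F) : #A ≤ 2 ^ #Sᶜ := by
  let clear (x : Word n) : Fin n → Bool := fun i => decide (i ∈ S) && x i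
  have hclear : ∀ x, corrupt (clear x, fun _ => ErrKind.F) x =
      List.ofFn fun i => some (decide (i ∉ S) && x i) := by
    intro x
    rw [corrupt_substitution]
    congr 1
    funext i
    by_cases hi : i ∈ S <;> simp [clear, hi]
  have hinj : Set.InjOn (fun (x : Word n) (i : ↥(Sᶜ)) => x i) A := by
    intro x₁ h₁ x₂ h₂ heq
    by_contra hne
    refine hA x₁ h₁ x₂ h₂ hne _ (hF (clear x₁) fun i hi => ?_) _ (hF (clear x₂) fun i hi => ?_) ?_
    · exact (Bool.and_eq_true_iff.mp hi).1 |> of_decide_eq_true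
    · exact (Bool.and_eq_true_iff.mp hi).1 |> of_decide_eq_true
    rw [hclear, hclear]
    congr 1
    funext i
    by_cases hi : i ∈ S
    · simp [hi]
    · simpa [hi] using congrFun heq ⟨i, mem_compl.mpr hi⟩
  calc #A ≤ #(univ : Finset (↥(Sᶜ) → Bool)) :=
        card_le_card_of_injOn _ (fun _ _ => mem_coe.mpr (mem_univ _)) hinj
    _ = 2 ^ #Sᶜ := by rw [card_univ, Fintype.card_fun, Fintype.card_bool, Fintype.card_coe]

lemma le_redundancy_of_card_le {n m : ℕ} {A : Finset (Word n)} (h : #A ≤ 2 ^ m) :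
    (n : ℝ) - m ≤ redundancy A := by
  unfold redundancy
  suffices Real.logb 2 #A ≤ m by linarith
  rcases (#A).eq_zero_or_pos with h0 | hpos
  · rw [h0, Nat.cast_zero, Real.logb_zero]
    positivity
  · calc Real.logb 2 #A ≤ Real.logb 2 ((2 : ℝ) ^ m) :=
          Real.logb_le_logb_of_le one_lt_two (by exact_mod_cast hpos) (by exact_mod_cast h)
      _ = m := by rw [Real.logb_pow, Real.logb_self_eq_one one_lt_two, mul_one]

lemma card_filter_dvd_val_add_one (n q : ℕ) : #{i : Fin n | q ∣ (i : ℕ) + 1} = n / q := by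
  rw [← Nat.card_multiples, ← card_map Fin.valEmbedding, map_filter', Fin.map_valEmbedding_univ,
    Nat.Iio_eq_range]
  refine congrArg card (filter_congr fun b hb => ?_)
  exact ⟨fun ⟨a, ha, hab⟩ => hab ▸ ha, fun h => ⟨⟨b, mem_range.mp hb⟩, h, rfl⟩⟩

/-- Redundancy lower bound for codes correcting all `3P`-far deletable error patterns,
fixed `P` (converse part of Theorem 1 of the paper). -/
theorem stmt2 (P : ℕ) (hP : 2 ≤ P) :
    ∃ N : ℕ, ∀ n : ℕ, N ≤ n → ∀ A : Finset (Word n),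
      CorrectsIn A {g : Pattern n | IsPFar (3 * P) g} →
      (n : ℝ) / (64 * (3 * (P : ℝ) + 6)) - 3 ≤ redundancy A := by
  refine ⟨0, fun n _ A hA => ?_⟩
  set S : Finset (Fin n) := {i | 3 * P ∣ (i : ℕ) + 1}
  have hfar : ∀ e : Fin n → Bool, (∀ i, e i = true → i ∈ S) →
      (e, fun _ => ErrKind.F) ∈ {g : Pattern n | IsPFar (3 * P) g} := by
    refine fun e he => isPFar_of_dvd_sub fun i j hi hj => ?_
    have hdvd := Int.dvd_sub (Int.natCast_dvd_natCast.mpr (mem_filter.mp (he i hi)).2)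
      (Int.natCast_dvd_natCast.mpr (mem_filter.mp (he j hj)).2)
    push_cast at hdvd
    simpa using hdvd
  have hred := le_redundancy_of_card_le (card_le_of_correctsIn_substitutions S hfar hA)
  have hS : #S = n / (3 * P) := card_filter_dvd_val_add_one n (3 * P)
  rw [card_compl, Fintype.card_fin, Nat.cast_sub (hS ▸ Nat.div_le_self n (3 * P)), hS] at hred
  have hfloor := Nat.sub_one_lt_floor ((n : ℝ) / (3 * P : ℕ))
  rw [Nat.floor_div_eq_div] at hfloor
  push_cast at hfloor
  have hP' : (2 : ℝ) ≤ P := by exact_mod_cast hP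
  have hdiv : (n : ℝ) / (64 * (3 * P + 6)) ≤ n / (3 * P) :=
    div_le_div_of_nonneg_left (Nat.cast_nonneg n) (by positivity) (by linarith)
  linarith
end

section
/- Let P ≥ 5 and n ≥ 2P be integers, and write n = tP + s with t ≥ 2 and 0 ≤ s ≤ P - 1. Suppose a₁ and a₂ satisfy #VT_{a₁}(P) ≥ 2^P/(2P+1) and #VT_{a₂}(P+s) ≥ 2^{P+s}/(2(P+s)+1). Then the code C_far(a₁,a₂,P,s,n) satisfies #C_far ≥ 2^n · ((1-δ(P))/(2P+1))^{n/P - 1} · 1/(4P), where δ(P) = (2P+1)/2^{P-1}. -/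
/-!
Splitting a word into its `t-1` inner blocks and its final block is a bijection, so `C_far` is
the product of `t-1` copies of `VT_{a₁}(P)` minus the two constant words with `VT_{a₂}(P+s)`.
Removing the constant words costs at most `2`, and `2^P/(2P+1) - 2 = 2^P (1-δ(P))/(2P+1)`;
this rate lies in `(0,1]` once `P ≥ 5`, so the exponent `t-1 ≤ n/P - 1` may be raised, and
`4P ≥ 2(P+s)+1` absorbs the final block.
-/

/-- The modified Varshamov–Tenengolts code
`VT_a(m) = {x ∈ {0,1}^m : Σ_{i=1}^m i·x_i ≡ a (mod 2m+1)}`. -/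
def VTcode (a m : ℕ) : Finset (Fin m → Bool) :=
  Finset.univ.filter fun x =>
    (∑ i : Fin m, ((i : ℕ) + 1) * (if x i then 1 else 0)) % (2 * m + 1) = a % (2 * m + 1)

/-- The `j`-th inner block (of length `P`) of a word of length `(t-1)*P + (P+s)`. -/
def innerBlock (P s t : ℕ) (x : Fin ((t - 1) * P + (P + s)) → Bool) (j : Fin (t - 1)) :
    Fin P → Bool :=
  fun i => x ⟨(j : ℕ) * P + (i : ℕ), by
    have h1 : (j : ℕ) * P + (i : ℕ) < ((j : ℕ) + 1) * P := by
      rw [Nat.succ_mul]; exact Nat.add_lt_add_left i.isLt _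
    have h2 : ((j : ℕ) + 1) * P ≤ (t - 1) * P := Nat.mul_le_mul_right _ j.isLt
    omega⟩

/-- The final block (of length `P+s`) of a word of length `(t-1)*P + (P+s)`. -/
def finalBlock (P s t : ℕ) (x : Fin ((t - 1) * P + (P + s)) → Bool) : Fin (P + s) → Bool :=
  fun i => x ⟨(t - 1) * P + (i : ℕ), Nat.add_lt_add_left i.isLt _⟩

/-- The code `C_far(a₁, a₂, P, s, n)` with `n = t*P + s`: concatenations of `t-1` words from
`VT_{a₁}(P) \ {all-zero, all-one}` followed by a word from `VT_{a₂}(P+s)`. -/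
def Cfar (a₁ a₂ P s t : ℕ) : Finset (Fin ((t - 1) * P + (P + s)) → Bool) :=
  Finset.univ.filter fun x =>
    (∀ j : Fin (t - 1), innerBlock P s t x j ∈ VTcode a₁ P ∧
      innerBlock P s t x j ≠ (fun _ => false) ∧ innerBlock P s t x j ≠ (fun _ => true)) ∧
    finalBlock P s t x ∈ VTcode a₂ (P + s)

def blockEquiv (P s t : ℕ) :
    (Fin ((t - 1) * P + (P + s)) → Bool) ≃ (Fin (t - 1) → Fin P → Bool) × (Fin (P + s) → Bool) :=
  ((finSumFinEquiv.arrowCongr (Equiv.refl Bool)).symm.trans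
      (Equiv.sumArrowEquivProdArrow _ _ _)).trans
    (Equiv.prodCongr ((finProdFinEquiv.arrowCongr (Equiv.refl Bool)).symm.trans (Equiv.curry _ _ _))
      (Equiv.refl _))

theorem blockEquiv_apply (P s t : ℕ) (x : Fin ((t - 1) * P + (P + s)) → Bool) :
    blockEquiv P s t x = (innerBlock P s t x, finalBlock P s t x) := by
  ext j i <;> refine congrArg x (Fin.ext ?_)
  · simp [finProdFinEquiv_apply_val, add_comm, mul_comm]
  · simp

theorem card_Cfar (a₁ a₂ P s t : ℕ) :
    (Cfar a₁ a₂ P s t).card =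
      (VTcode a₁ P \ {fun _ => false, fun _ => true}).card ^ (t - 1) * (VTcode a₂ (P + s)).card := by
  rw [← Fintype.card_piFinset_const, ← Finset.card_product]
  refine Finset.card_equiv (blockEquiv P s t) fun x => ?_
  simp [Cfar, blockEquiv_apply, Fintype.mem_piFinset]

theorem card_le_card_sdiff_pair_add_two {α : Type*} [DecidableEq α] (u : Finset α) (a b : α) :
    u.card ≤ (u \ {a, b}).card + 2 :=
  Finset.card_le_card_sdiff_add_card.trans (Nat.add_le_add_left Finset.card_le_two _)

theorem two_mul_add_one_lt_two_pow_pred {P : ℕ} (hP : 5 ≤ P) : 2 * P + 1 < 2 ^ (P - 1) := by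
  induction P, hP using Nat.le_induction with
  | base => norm_num
  | succ m hm ih =>
    obtain ⟨k, rfl⟩ : ∃ k, m = k + 1 := ⟨m - 1, by omega⟩
    rw [Nat.add_sub_cancel] at ih ⊢
    rw [pow_succ]
    omega

theorem two_pow_mul_rate {P : ℕ} (hP : 1 ≤ P) :
    (2 : ℝ) ^ P * ((1 - (2 * (P : ℝ) + 1) / 2 ^ (P - 1)) / (2 * (P : ℝ) + 1)) =
      2 ^ P / (2 * (P : ℝ) + 1) - 2 := by
  obtain ⟨k, rfl⟩ : ∃ k, P = k + 1 := ⟨P - 1, by omega⟩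
  rw [Nat.add_sub_cancel, pow_succ]
  field_simp

theorem rate_pos_and_le_one {P : ℕ} (hP : 5 ≤ P) :
    0 < (1 - (2 * (P : ℝ) + 1) / 2 ^ (P - 1)) / (2 * (P : ℝ) + 1) ∧
      (1 - (2 * (P : ℝ) + 1) / 2 ^ (P - 1)) / (2 * (P : ℝ) + 1) ≤ 1 := by
  have hδ : (2 * (P : ℝ) + 1) / 2 ^ (P - 1) < 1 := by
    rw [div_lt_one (by positivity)]
    exact_mod_cast two_mul_add_one_lt_two_pow_pred hP
  have hδ0 : 0 ≤ (2 * (P : ℝ) + 1) / 2 ^ (P - 1) := by positivity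
  refine ⟨div_pos (by linarith) (by positivity), (div_le_one (by positivity)).2 ?_⟩
  linarith [(Nat.cast_nonneg P : (0 : ℝ) ≤ P)]

theorem stmt6_general (P s t n a₁ a₂ : ℕ) (hP : 5 ≤ P) (ht : 2 ≤ t)
    (hs : s ≤ P - 1) (hn : n = t * P + s)
    (ha₁ : (2 : ℝ) ^ P / (2 * (P : ℝ) + 1) ≤ ((VTcode a₁ P).card : ℝ))
    (ha₂ : (2 : ℝ) ^ (P + s) / (2 * ((P : ℝ) + s) + 1) ≤ ((VTcode a₂ (P + s)).card : ℝ)) :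
    (2 : ℝ) ^ n *
        ((1 - (2 * (P : ℝ) + 1) / 2 ^ (P - 1)) / (2 * (P : ℝ) + 1)) ^ ((n : ℝ) / P - 1) *
        (1 / (4 * (P : ℝ))) ≤ ((Cfar a₁ a₂ P s t).card : ℝ) := by
  set r := (1 - (2 * (P : ℝ) + 1) / 2 ^ (P - 1)) / (2 * (P : ℝ) + 1)
  obtain ⟨hr0, hr1⟩ := rate_pos_and_le_one hP
  have hPpos : (0 : ℝ) < P := by norm_cast; omega
  have hexp : r ^ ((n : ℝ) / P - 1) ≤ r ^ (t - 1) := by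
    rw [← Real.rpow_natCast]
    refine Real.rpow_le_rpow_of_exponent_ge hr0 hr1 ?_
    rw [Nat.cast_sub (by omega), Nat.cast_one, sub_le_sub_iff_right, le_div_iff₀ hPpos, hn]
    push_cast
    linarith [(Nat.cast_nonneg s : (0 : ℝ) ≤ s)]
  have hinner : (2 : ℝ) ^ P * r ≤ (VTcode a₁ P \ {fun _ => false, fun _ => true}).card := by
    have h : ((VTcode a₁ P).card : ℝ) ≤ (VTcode a₁ P \ {fun _ => false, fun _ => true}).card + 2 :=
      mod_cast card_le_card_sdiff_pair_add_two _ _ _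
    rw [two_pow_mul_rate (by omega)]
    linarith
  have hden : 1 / (4 * (P : ℝ)) ≤ 1 / (2 * ((P : ℝ) + s) + 1) := by
    have : (s : ℝ) + 1 ≤ P := by norm_cast; omega
    exact one_div_le_one_div_of_le (by positivity) (by linarith)
  have h2n : (2 : ℝ) ^ n = ((2 : ℝ) ^ P) ^ (t - 1) * 2 ^ (P + s) := by
    rw [← pow_mul, ← pow_add]; congr 1
    obtain ⟨k, rfl⟩ : ∃ k, t = k + 1 := ⟨t - 1, by omega⟩
    rw [hn, Nat.add_sub_cancel]; ring
  rw [card_Cfar]; push_cast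
  calc (2 : ℝ) ^ n * r ^ ((n : ℝ) / P - 1) * (1 / (4 * (P : ℝ)))
      ≤ (2 : ℝ) ^ n * r ^ (t - 1) * (1 / (2 * ((P : ℝ) + s) + 1)) := by gcongr
    _ = ((2 : ℝ) ^ P * r) ^ (t - 1) * ((2 : ℝ) ^ (P + s) / (2 * ((P : ℝ) + s) + 1)) := by
      rw [h2n, mul_pow]; ring
    _ ≤ _ := by gcongr

/-- Size lower bound for the code `C_far`. -/
theorem stmt6 (P s t n a₁ a₂ : ℕ) (hP : 5 ≤ P) (hn2 : 2 * P ≤ n) (ht : 2 ≤ t)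
    (hs : s ≤ P - 1) (hn : n = t * P + s)
    (ha₁ : (2 : ℝ) ^ P / (2 * (P : ℝ) + 1) ≤ ((VTcode a₁ P).card : ℝ))
    (ha₂ : (2 : ℝ) ^ (P + s) / (2 * ((P : ℝ) + s) + 1) ≤ ((VTcode a₂ (P + s)).card : ℝ)) :
    (2 : ℝ) ^ n *
        ((1 - (2 * (P : ℝ) + 1) / 2 ^ (P - 1)) / (2 * (P : ℝ) + 1)) ^ ((n : ℝ) / P - 1) *
        (1 / (4 * (P : ℝ))) ≤ ((Cfar a₁ a₂ P s t).card : ℝ) :=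
  stmt6_general P s t n a₁ a₂ hP ht hs hn ha₁ ha₂
end

section
/- Let n, k, P be positive integers with 2 ≤ k, k² ≤ n and 6P ≤ n. Then the ratio of binomial coefficients satisfies C(n-3P, k)/C(n, k) ≥ 1 - 3Pk/n - 2·(3Pk² + k⁴)/n². -/
/-!
Writing `m = 3P`, the ratio is `∏_{i<k} (1 - m/(n-i))`; every factor is at least
`1 - m/(n-k+1)`, so Bernoulli's inequality bounds the ratio below by `1 - km/(n-k+1)`.
Finally `k² ≤ n` forces `n ≥ 2k - 2`, which is exactly what makes
`km/(n-k+1) ≤ km/n + 2(mk² + k⁴)/n²`.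
-/

open Finset

theorem Nat.cast_descFactorial_eq_prod {R : Type*} [CommRing R] {n k : ℕ} (hk : k ≤ n + 1) :
    (n.descFactorial k : R) = ∏ i ∈ range k, ((n : R) - i) := by
  rw [Nat.descFactorial_eq_prod_range, Nat.cast_prod]
  refine prod_congr rfl fun i hi => ?_
  rw [Nat.cast_sub (by grind)]

theorem Nat.cast_choose_sub_div_cast_choose {K : Type*} [Field K] [CharZero K] {n m k : ℕ}
    (h : m + k ≤ n + 1) :
    ((n - m).choose k : K) / n.choose k = ∏ i ∈ range k, ((n : K) - m - i) / (n - i) := by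
  have hfact : (k.factorial : K) ≠ 0 := Nat.cast_ne_zero.mpr k.factorial_ne_zero
  rw [prod_div_distrib, ← mul_div_mul_left _ _ hfact]
  congr 1
  · rw [← Nat.cast_mul, ← Nat.descFactorial_eq_factorial_mul_choose,
      Nat.cast_descFactorial_eq_prod (by omega)]
    refine prod_congr rfl fun i hi => ?_
    rw [Nat.cast_sub (by grind)]
  · rw [← Nat.cast_mul, ← Nat.descFactorial_eq_factorial_mul_choose,
      Nat.cast_descFactorial_eq_prod (by omega)]

theorem one_sub_mul_div_le_cast_choose_sub_div_cast_choose {n m k : ℕ} (hk : k ≤ n)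
    (h : m + k ≤ n + 1) :
    1 - k * m / ((n : ℝ) - k + 1) ≤ ((n - m).choose k : ℝ) / n.choose k := by
  have hden : (0 : ℝ) < n - k + 1 := by
    have : (k : ℝ) ≤ n := by exact_mod_cast hk
    linarith
  set c : ℝ := 1 - m / ((n : ℝ) - k + 1)
  have hc : 0 ≤ c := by
    rw [sub_nonneg, div_le_one hden]
    have : ((m + k : ℕ) : ℝ) ≤ n + 1 := by exact_mod_cast h
    push_cast at this; linarith
  have hfactor : ∀ i ∈ range k, c ≤ ((n : ℝ) - m - i) / (n - i) := by
    intro i hi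
    have hik : (i : ℝ) + 1 ≤ k := by exact_mod_cast mem_range.mp hi
    have hni : (0 : ℝ) < n - i := by linarith
    rw [show ((n : ℝ) - m - i) / (n - i) = 1 - m / (n - i) by field_simp; ring]
    show 1 - (m : ℝ) / (n - k + 1) ≤ _
    gcongr
    linarith
  calc 1 - k * m / ((n : ℝ) - k + 1) = 1 + k * (c - 1) := by ring
    _ ≤ c ^ k := one_add_mul_sub_le_pow (by linarith) k
    _ = ∏ _i ∈ range k, c := by rw [prod_const, card_range]
    _ ≤ ∏ i ∈ range k, ((n : ℝ) - m - i) / (n - i) := prod_le_prod (fun _ _ => hc) hfactor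
    _ = ((n - m).choose k : ℝ) / n.choose k := (Nat.cast_choose_sub_div_cast_choose h).symm

theorem mul_div_sub_add_one_le {n k m : ℝ} (hn : 0 < n) (hk : 0 ≤ k) (hm : 0 ≤ m)
    (hkn : k ^ 2 ≤ n) :
    k * m / (n - k + 1) ≤ m * k / n + 2 * (m * k ^ 2 + k ^ 4) / n ^ 2 := by
  have hden : 0 < n - k + 1 := by nlinarith [sq_nonneg (k - 1)]
  have hgap : 0 ≤ n - 2 * k + 2 := by nlinarith [sq_nonneg (k - 1)]
  rw [div_add_div _ _ hn.ne' (by positivity), div_le_div_iff₀ hden (by positivity)]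
  have : 0 ≤ n * (m * k * n + m * k ^ 2 * (n - 2 * k + 2) + 2 * k ^ 4 * (n - k + 1)) := by
    positivity
  linarith

theorem stmt16_general (n k P : ℕ) (hn : 0 < n) (hkn : k ^ 2 ≤ n) (h6P : 6 * P ≤ n) :
    1 - 3 * (P : ℝ) * k / n - 2 * (3 * (P : ℝ) * k ^ 2 + k ^ 4) / n ^ 2 ≤
      (((n - 3 * P).choose k : ℝ)) / ((n.choose k : ℝ)) := by
  have hk : k ≤ n := by nlinarith
  have hPk : 3 * P + k ≤ n + 1 := by nlinarith
  have hratio := one_sub_mul_div_le_cast_choose_sub_div_cast_choose hk hPk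
  have hbound := mul_div_sub_add_one_le (m := ((3 * P : ℕ) : ℝ)) (Nat.cast_pos.mpr hn)
    k.cast_nonneg (Nat.cast_nonneg _) (by exact_mod_cast hkn)
  push_cast at hratio hbound
  linarith

/-- Lower bound on the ratio of binomial coefficients `C(n-3P, k)/C(n, k)`. -/
theorem stmt16 (n k P : ℕ) (hn : 0 < n) (hk : 2 ≤ k) (hkn : k ^ 2 ≤ n)
    (hP : 0 < P) (h6P : 6 * P ≤ n) :
    1 - 3 * (P : ℝ) * k / n - 2 * (3 * (P : ℝ) * k ^ 2 + k ^ 4) / n ^ 2 ≤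
      (((n - 3 * P).choose k : ℝ)) / ((n.choose k : ℝ)) :=
  stmt16_general n k P hn hkn h6P
end

section
/- Let n ≥ P ≥ 2 be integers and x ∈ {0,1}^n. For r ≥ 1 call the five bits x_{(3P+5)(r-1)+1},…,x_{(3P+5)(r-1)+5} the r-th 5-window of x, and call it good if its first and last bits are 1 and its middle three bits are 0. Suppose at least m of the 5-windows with 1 ≤ r ≤ ⌊n/(3P+5)⌋ are good. Then the set N(x) of all words obtainable from x by 3P-far deletion-only error patterns (including the pattern with no errors) satisfies #N(x) ≥ 2^m. -/
/-- Corruption of `x` by a deletion-only error pattern with error indicator `e`: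
each bit `x_i` with `e_i = 1` is deleted. -/
def delCorrupt {n : ℕ} (x : Fin n → Bool) (e : Fin n → Bool) : List Bool :=
  ((List.ofFn fun i => (x i, e i)).filter fun p => !p.2).map Prod.fst

/-- An error-indicator word `e` is `P`-far if any two distinct error positions are at
distance at least `P`. -/
def IsPFarE {n : ℕ} (P : ℕ) (e : Fin n → Bool) : Prop :=
  ∀ i j : Fin n, i ≠ j → e i = true → e j = true →
    (P : ℤ) ≤ |((i : ℕ) : ℤ) - ((j : ℕ) : ℤ)|

/-- `N(x)`: the set of all words obtainable from `x` by `P`-far deletion-only error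
patterns (including the pattern with no errors). -/
def Ndel (n P : ℕ) (x : Fin n → Bool) : Set (List Bool) :=
  {w | ∃ e : Fin n → Bool, IsPFarE P e ∧ w = delCorrupt x e}

/-- The `i`-th bit (`0`-based) of a word, defaulting to `false` out of range. -/
def getBit {n : ℕ} (x : Fin n → Bool) (i : ℕ) : Bool :=
  if h : i < n then x ⟨i, h⟩ else false

/-- The `r`-th 5-window (`1`-based) of `x` consists of the five bits at positions
`(3P+5)(r-1)+1, …, (3P+5)(r-1)+5` (1-based); it is good if its first and last bits are `1`
and its middle three bits are `0`. -/
def goodWindow {n : ℕ} (P : ℕ) (x : Fin n → Bool) (r : ℕ) : Prop :=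
  getBit x ((3 * P + 5) * (r - 1)) = true ∧
  getBit x ((3 * P + 5) * (r - 1) + 1) = false ∧
  getBit x ((3 * P + 5) * (r - 1) + 2) = false ∧
  getBit x ((3 * P + 5) * (r - 1) + 3) = false ∧
  getBit x ((3 * P + 5) * (r - 1) + 4) = true

instance {n : ℕ} (P : ℕ) (x : Fin n → Bool) : DecidablePred (goodWindow P x) := fun r => by
  unfold goodWindow; infer_instance


/-! For every set `S` of good windows, delete the first bit of each window in `S`. These
positions are `3P + 5` apart, so the pattern is `3P`-far. Distinct sets give distinct words: at
the first window where `S` and `S'` differ, say at position `p` with `p ∈ S`, both outputs agree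
before `p`, and then one continues with `x_{p+1} = 0` and the other with `x_p = 1`. -/

open Finset
open scoped symmDiff

lemma filter_not_snd_map_fst_ne {α : Type*} (u v w : List (α × Bool)) {a b : α} (hab : a ≠ b) :
    ((u ++ (b, true) :: (a, false) :: v).filter fun q => !q.2).map Prod.fst ≠
      ((u ++ (b, false) :: w).filter fun q => !q.2).map Prod.fst := by
  simp [hab]

lemma List.ofFn_eq_take_append_cons_cons {β : Type*} {n : ℕ} (f : Fin n → β) (p : ℕ)
    (hp : p + 1 < n) :
    List.ofFn f =
      (List.ofFn f).take p ++ f ⟨p, by omega⟩ :: f ⟨p + 1, hp⟩ :: (List.ofFn f).drop (p + 2) := by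
  conv_lhs => rw [← List.take_append_drop p (List.ofFn f),
    List.drop_eq_getElem_cons (by simp; omega), List.drop_eq_getElem_cons (by simp; omega)]
  simp

lemma delCorrupt_ne_of_first_difference {n : ℕ} {x e e' : Fin n → Bool} (p : ℕ)
    (hp : p + 1 < n) (hagree : ∀ i : Fin n, (i : ℕ) < p → e i = e' i)
    (he : e ⟨p, by omega⟩ = true) (he_succ : e ⟨p + 1, hp⟩ = false)
    (he' : e' ⟨p, by omega⟩ = false) (hx : x ⟨p + 1, hp⟩ ≠ x ⟨p, by omega⟩) :
    delCorrupt x e ≠ delCorrupt x e' := by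
  have htake :
      (List.ofFn fun i => (x i, e i)).take p = (List.ofFn fun i => (x i, e' i)).take p := by
    apply List.ext_getElem (by simp)
    intro i hi _
    simp only [List.length_take, List.length_ofFn] at hi
    simp [hagree ⟨i, by omega⟩ (by simp; omega)]
  unfold delCorrupt
  rw [List.ofFn_eq_take_append_cons_cons _ p hp,
    List.ofFn_eq_take_append_cons_cons (fun i => (x i, e' i)) p hp, htake]
  simp only [he, he_succ, he']
  exact filter_not_snd_map_fst_ne _ _ _ hx

def deletionPattern (n : ℕ) (S : Finset ℕ) : Fin n → Bool := fun i => decide ((i : ℕ) ∈ S)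

lemma isPFarE_deletionPattern {n d : ℕ} {S : Finset ℕ}
    (hsep : ∀ p ∈ S, ∀ q ∈ S, p < q → p + d ≤ q) : IsPFarE d (deletionPattern n S) := by
  intro i j hij hi hj
  simp only [deletionPattern, decide_eq_true_eq] at hi hj
  rcases lt_or_gt_of_ne (Fin.val_ne_of_ne hij) with h | h
  · have := hsep _ hi _ hj h
    exact le_abs.2 (by omega)
  · have := hsep _ hj _ hi h
    exact le_abs.2 (by omega)

section

variable {n : ℕ} (x : Fin n → Bool)

lemma delCorrupt_deletionPattern_ne {S S' : Finset ℕ} {r : ℕ} (hrS : r ∈ S) (hrS' : r ∉ S')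
    (hr_succ : r + 1 ∉ S) (hagree : ∀ i < r, i ∈ S ↔ i ∈ S')
    (hflip : ∃ h : r + 1 < n, x ⟨r + 1, h⟩ ≠ x ⟨r, by omega⟩) :
    delCorrupt x (deletionPattern n S) ≠ delCorrupt x (deletionPattern n S') := by
  obtain ⟨hr, hx⟩ := hflip
  exact delCorrupt_ne_of_first_difference r hr
    (fun i hi => by simp [deletionPattern, hagree i hi]) (by simpa [deletionPattern])
    (by simpa [deletionPattern]) (by simpa [deletionPattern]) hx

lemma delCorrupt_deletionPattern_injOn {T : Finset ℕ} (hsucc : ∀ p ∈ T, p + 1 ∉ T)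
    (hflip : ∀ p ∈ T, ∃ h : p + 1 < n, x ⟨p + 1, h⟩ ≠ x ⟨p, by omega⟩) :
    Set.InjOn (fun S => delCorrupt x (deletionPattern n S)) (T.powerset : Set (Finset ℕ)) := by
  intro S hS S' hS' heq
  simp only [coe_powerset, Set.mem_preimage, Set.mem_powerset_iff, coe_subset] at hS hS'
  by_contra hne
  have hD : (S ∆ S').Nonempty := symmDiff_nonempty.2 hne
  set r := (S ∆ S').min' hD
  have hagree : ∀ i < r, i ∈ S ↔ i ∈ S' := fun i hi => by
    by_contra h
    exact (min'_le _ i (mem_symmDiff.2 (by tauto))).not_gt hi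
  rcases mem_symmDiff.1 ((S ∆ S').min'_mem hD) with ⟨hrS, hrS'⟩ | ⟨hrS', hrS⟩
  · exact delCorrupt_deletionPattern_ne x hrS hrS' (fun h => hsucc r (hS hrS) (hS h)) hagree
      (hflip r (hS hrS)) heq
  · exact delCorrupt_deletionPattern_ne x hrS' hrS (fun h => hsucc r (hS' hrS') (hS' h))
      (fun i hi => (hagree i hi).symm) (hflip r (hS' hrS')) heq.symm

theorem two_pow_card_le_ncard_Ndel {d : ℕ} (T : Finset ℕ)
    (hsep : ∀ p ∈ T, ∀ q ∈ T, p < q → p + d ≤ q) (hsucc : ∀ p ∈ T, p + 1 ∉ T)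
    (hflip : ∀ p ∈ T, ∃ h : p + 1 < n, x ⟨p + 1, h⟩ ≠ x ⟨p, by omega⟩) :
    2 ^ T.card ≤ (Ndel n d x).ncard := by
  rw [← card_powerset, ← Set.ncard_coe_finset]
  refine Set.ncard_le_ncard_of_injOn _ (fun S hS => ?_)
    (delCorrupt_deletionPattern_injOn x hsucc hflip)
    ((Set.finite_range (delCorrupt x)).subset fun w ⟨e, _, hw⟩ => ⟨e, hw.symm⟩)
  simp only [coe_powerset, Set.mem_preimage, Set.mem_powerset_iff, coe_subset] at hS
  exact ⟨_, isPFarE_deletionPattern fun p hp q hq => hsep p (hS hp) q (hS hq), rfl⟩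

end

lemma getBit_eq_true_iff {n : ℕ} {x : Fin n → Bool} {i : ℕ} :
    getBit x i = true ↔ ∃ h : i < n, x ⟨i, h⟩ = true := by
  unfold getBit; split_ifs with h <;> simp [h]

lemma goodWindow.flip {n P r : ℕ} {x : Fin n → Bool} (h : goodWindow P x r) :
    ∃ h : (3 * P + 5) * (r - 1) + 1 < n,
      x ⟨(3 * P + 5) * (r - 1) + 1, h⟩ ≠ x ⟨(3 * P + 5) * (r - 1), by omega⟩ := by
  obtain ⟨h0, h1, -, -, h4⟩ := h
  obtain ⟨hn, _⟩ := getBit_eq_true_iff.1 h4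
  obtain ⟨_, hx0⟩ := getBit_eq_true_iff.1 h0
  refine ⟨by omega, ?_⟩
  simp only [getBit, dif_pos (show (3 * P + 5) * (r - 1) + 1 < n by omega)] at h1
  simp [hx0, h1]

theorem stmt18_general (n P : ℕ) (x : Fin n → Bool) (m : ℕ)
    (hm : m ≤ ((Finset.Icc 1 (n / (3 * P + 5))).filter fun r => goodWindow P x r).card) :
    2 ^ m ≤ (Ndel n (3 * P) x).ncard := by
  set G := (Finset.Icc 1 (n / (3 * P + 5))).filter fun r => goodWindow P x r
  set T := G.image fun r => (3 * P + 5) * (r - 1)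
  have hinj : Set.InjOn (fun r => (3 * P + 5) * (r - 1)) G := fun r hr s hs hrs => by
    have := Nat.eq_of_mul_eq_mul_left (by omega) hrs
    simp only [coe_filter, mem_Icc, Set.mem_ofPred_eq, G] at hr hs
    omega
  have hspaced : ∀ p ∈ T, ∀ q ∈ T, p < q → p + (3 * P + 5) ≤ q := by
    simp only [T, mem_image]
    rintro _ ⟨r, -, rfl⟩ _ ⟨s, -, rfl⟩ h
    have := Nat.lt_of_mul_lt_mul_left h
    nlinarith
  calc 2 ^ m ≤ 2 ^ T.card := by
        rw [card_image_of_injOn hinj]; exact Nat.pow_le_pow_right two_pos hm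
    _ ≤ (Ndel n (3 * P) x).ncard := by
      refine two_pow_card_le_ncard_Ndel x T (fun p hp q hq h => ?_) (fun p hp hp1 => ?_) ?_
      · linarith [hspaced p hp q hq h]
      · linarith [hspaced p hp _ hp1 (by omega)]
      · simp only [T, mem_image]
        rintro _ ⟨r, hr, rfl⟩
        exact (mem_filter.1 hr).2.flip

/-- If `x` has at least `m` good 5-windows then `#N(x) ≥ 2^m`. -/
theorem stmt18 (n P : ℕ) (hP : 2 ≤ P) (hn : P ≤ n) (x : Fin n → Bool) (m : ℕ)
    (hm : m ≤ ((Finset.Icc 1 (n / (3 * P + 5))).filter fun r => goodWindow P x r).card) :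
    2 ^ m ≤ (Ndel n (3 * P) x).ncard :=
  stmt18_general n P x m hm
end
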